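/- Let f : (ℂ^n,0) → (ℂ^n,0) be a finite holomorphic germ. Then l_0(f) = (min_{i=1,…,n} o_f(z_i))^{−1}, where z_i denotes the i-th coordinate function. -/

import Mathlib

open Filter Topology Polynomial

noncomputable section

namespace LojPaper

/-- The ring of germs at a filter of `ℂ`-valued functions is a `ℂ`-algebra. -/
instance germAlgebra {α : Type*} (l : Filter α) : Algebra ℂ (Filter.Germ l ℂ) where
  algebraMap := (Filter.Germ.coeRingHom l).comp (Pi.constRingHom α ℂ)
  commutes' r g := mul_comm _ _
  smul_def' r g := by
    refine g.inductionOn fun u => ?_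
    change ((r • u : α → ℂ) : Filter.Germ l ℂ) = ((fun _ => r : α → ℂ) : Filter.Germ l ℂ) * ↑u
    rw [← Filter.Germ.coe_mul]
    rfl

variable {E E' : Type*} [NormedAddCommGroup E] [NormedSpace ℂ E]
  [NormedAddCommGroup E'] [NormedSpace ℂ E']

/-- The subalgebra of germs at `0 ∈ E` represented by holomorphic (analytic) functions:
the counterpart of the ring `ℂ{z}` of convergent power series. -/
def analyticGermsAt (E : Type*) [NormedAddCommGroup E] [NormedSpace ℂ E] :
    Subalgebra ℂ (Filter.Germ (𝓝 (0 : E)) ℂ) where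
  carrier := {g | ∃ u : E → ℂ, AnalyticAt ℂ u 0 ∧ g = ↑u}
  mul_mem' := by
    rintro _ _ ⟨u, hu, rfl⟩ ⟨v, hv, rfl⟩
    exact ⟨u * v, hu.mul hv, rfl⟩
  add_mem' := by
    rintro _ _ ⟨u, hu, rfl⟩ ⟨v, hv, rfl⟩
    exact ⟨u + v, hu.add hv, rfl⟩
  algebraMap_mem' := fun c => ⟨fun _ => c, analyticAt_const, rfl⟩

/-- The ideal of the ring of analytic germs at `0 ∈ E` generated by the germs of a family
of functions; for the components `f₁, …, fₙ` of a map this is the ideal `I(f)`. -/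
def idealOfFamily {ι : Type*} (f : ι → E → ℂ) : Ideal (analyticGermsAt E) :=
  Ideal.span {g : analyticGermsAt E | ∃ i, (g : Filter.Germ (𝓝 (0 : E)) ℂ) = ↑(f i)}

/-- The multiplicity `dim_ℂ ℂ{z}/I(f)` attached to a family of analytic functions. -/
def multiplicityOfFamily {ι : Type*} (f : ι → E → ℂ) : ℕ :=
  Module.finrank ℂ ((analyticGermsAt E) ⧸ idealOfFamily f)

/-- The multiplicity `m₀(f) = dim_ℂ ℂ{z}/I(f)` of a holomorphic map germ. -/
def germMult {n : ℕ} (f : E → (Fin n → ℂ)) : ℕ :=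
  multiplicityOfFamily fun i z => f z i

/-- `f` represents a finite holomorphic germ `(E,0) → (ℂⁿ,0)` : it is analytic at `0`,
maps `0` to `0` and has an isolated zero at the origin. -/
structure IsFiniteGerm {n : ℕ} (f : E → (Fin n → ℂ)) : Prop where
  analyticAt : ∀ i, AnalyticAt ℂ (fun z => f z i) 0
  map_zero : f 0 = 0
  isolatedZero : ∃ U ∈ 𝓝 (0 : E), ∀ z ∈ U, f z = 0 → z = 0

/-- The Łojasiewicz exponent `l₀(f)`: the smallest `θ > 0` such that
`|f(z)| ≥ c|z|^θ` with some `c > 0` on some neighbourhood of `0`. -/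
def lojExp (f : E → E') : ℝ :=
  sInf {θ : ℝ | 0 < θ ∧ ∃ c : ℝ, 0 < c ∧ ∀ᶠ z in 𝓝 (0 : E), c * ‖z‖ ^ θ ≤ ‖f z‖}

/-- The Łojasiewicz exponent `o_f(h)` of `h` relative to `f`: the least upper bound of all
`θ > 0` such that `|h(z)| ≤ c|f(z)|^θ` with some `c > 0` on some neighbourhood of `0`. -/
def relLojExp (f : E → E') (h : E → ℂ) : ℝ :=
  sSup {θ : ℝ | 0 < θ ∧ ∃ c : ℝ, 0 < c ∧ ∀ᶠ z in 𝓝 (0 : E), ‖h z‖ ≤ c * ‖f z‖ ^ θ}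

/-- `F : P × ℂⁿ → ℂⁿ` is a deformation of the germ `f` (with parameter space `P`):
`F` is analytic at the origin, `F(0,z) = f(z)` as germs and `F(t,0) = 0` as germs. -/
structure IsDeformation {n : ℕ} {P : Type*} [NormedAddCommGroup P] [NormedSpace ℂ P]
    (F : P × (Fin n → ℂ) → (Fin n → ℂ)) (f : (Fin n → ℂ) → (Fin n → ℂ)) : Prop where
  analyticAt : ∀ i, AnalyticAt ℂ (fun p => F p i) 0
  zero_param : ∀ᶠ z in 𝓝 (0 : Fin n → ℂ), F (0, z) = f z
  zero_fiber : ∀ᶠ t in 𝓝 (0 : P), F (t, 0) = 0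

/-- Composition with `f` as a ring homomorphism on germs at `0`. -/
def germCompRingHom (f : E → E') (hf : Filter.Tendsto f (𝓝 (0 : E)) (𝓝 (0 : E'))) :
    Filter.Germ (𝓝 (0 : E')) ℂ →+* Filter.Germ (𝓝 (0 : E)) ℂ where
  toFun g := g.compTendsto f hf
  map_one' := rfl
  map_zero' := rfl
  map_mul' g₁ g₂ := by
    refine g₁.inductionOn fun u => g₂.inductionOn fun v => ?_
    rfl
  map_add' g₁ g₂ := by
    refine g₁.inductionOn fun u => g₂.inductionOn fun v => ?_
    rfl

end LojPaper

namespace LojPaper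

variable {E E' : Type*} [NormedAddCommGroup E] [NormedSpace ℂ E]
  [NormedAddCommGroup E'] [NormedSpace ℂ E']

/-- `Q(f,h) = 0` : the polynomial `Q` with coefficients in the ring `ℂ{w}` of analytic germs
on the target annihilates the pair `(f,h)`, i.e. substituting `w := f(z)`, `s := h(z)`
gives the zero germ. -/
def AnnihilatesPair (f : E → E') (hf : Filter.Tendsto f (𝓝 (0 : E)) (𝓝 (0 : E')))
    (h : E → ℂ) (Q : Polynomial (analyticGermsAt E')) : Prop :=
  Polynomial.eval₂ ((germCompRingHom f hf).comp (analyticGermsAt E').val.toRingHom)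
    (↑h : Filter.Germ (𝓝 (0 : E)) ℂ) Q = 0

/-- `P` is the characteristic polynomial of `h` relative to `f` (a germ of multiplicity `m`):
`P = Q^r` where `Q ∈ ℂ{w}[s]` is the (unique) monic irreducible polynomial with `Q(f,h) = 0`
and `r·deg Q = m`. -/
def IsCharPoly (m : ℕ) (f : E → E') (h : E → ℂ)
    (P : Polynomial (Filter.Germ (𝓝 (0 : E')) ℂ)) : Prop :=
  ∃ (hf : Filter.Tendsto f (𝓝 (0 : E)) (𝓝 (0 : E')))
    (Q : Polynomial (analyticGermsAt E')) (r : ℕ),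
      Q.Monic ∧ Irreducible Q ∧ AnnihilatesPair f hf h Q ∧
      Q.natDegree * r = m ∧ P = (Q ^ r).map (analyticGermsAt E').val.toRingHom

/-- The monic polynomial `s^m + a₁(w)s^{m-1} + ⋯ + a_m(w)` (with `a i = a_{i+1}`),
as a polynomial with coefficients in the ring of germs at `0 ∈ E`. -/
def polyOfCoeffFuns (m : ℕ) (a : Fin m → (E → ℂ)) :
    Polynomial (Filter.Germ (𝓝 (0 : E)) ℂ) :=
  Polynomial.X ^ m +
    ∑ i : Fin m, Polynomial.C (↑(a i) : Filter.Germ (𝓝 (0 : E)) ℂ) *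
      Polynomial.X ^ (m - (i.1 + 1))

/-- The value of `s^m + a₁(w)s^{m-1} + ⋯ + a_m(w)` at a point `(w,s)`. -/
def monicPolyValue (m : ℕ) (a : Fin m → (E → ℂ)) (w : E) (s : ℂ) : ℂ :=
  s ^ m + ∑ i : Fin m, a i w * s ^ (m - (i.1 + 1))

/-- The order of vanishing at `0` of a function (finite holomorphic case):
the least `d` such that the `d`-th derivative at `0` is nonzero. -/
def vanishOrder (g : E → ℂ) : ℕ :=
  sInf {d : ℕ | iteratedFDeriv ℂ d g 0 ≠ 0}

/-- `f : U → V` is an `m`-sheeted branched covering: it maps `U` onto `V`, is proper over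
`V`, and away from a thin (relatively closed, with empty interior) branch locus `Z ⊆ V`
every point of `V \ Z` has a neighbourhood over which `f` has exactly `m` disjoint
continuous local sections covering the whole preimage. -/
structure IsBranchedCoveringOn (m : ℕ) (f : E → E') (U : Set E) (V : Set E') : Prop where
  mapsTo : Set.MapsTo f U V
  surjOn : Set.SurjOn f U V
  proper : ∀ K ⊆ V, IsCompact K → IsCompact (U ∩ f ⁻¹' K)
  branched : ∃ Z ⊆ V, closure Z ∩ V ⊆ Z ∧ interior Z = ∅ ∧
    ∀ w ∈ V \ Z, ∃ W ∈ 𝓝 w, W ⊆ V \ Z ∧ ∃ g : Fin m → E' → E,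
      (∀ i, ContinuousOn (g i) W) ∧
      (∀ i, ∀ w' ∈ W, g i w' ∈ U ∧ f (g i w') = w') ∧
      (∀ i j, ∀ w' ∈ W, g i w' = g j w' → i = j) ∧
      (∀ z ∈ U, f z ∈ W → ∃ i, z = g i (f z))

/-- The closed upper-right quadrant with corner `v`. -/
def quadrantAt (v : ℝ × ℝ) : Set (ℝ × ℝ) := {p | v.1 ≤ p.1 ∧ v.2 ≤ p.2}

/-- The Newton polygon `𝒩(P)` of the distinguished polynomial
`P = s^m + a₁(w)s^{m-1} + ⋯ + a_m(w)` : the convex hull of the union of the quadrants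
with corners `(ord aᵢ, m - i)` for `i` with `aᵢ ≠ 0` (including `(0,m)` for `a₀ = 1`). -/
def newtonPolygon (m : ℕ) (a : Fin m → (E → ℂ)) : Set (ℝ × ℝ) :=
  convexHull ℝ (quadrantAt (0, (m : ℝ)) ∪
    ⋃ i ∈ {i : Fin m | (↑(a i) : Filter.Germ (𝓝 (0 : E)) ℂ) ≠ 0},
      quadrantAt ((vanishOrder (a i) : ℝ), ((m - (i.1 + 1) : ℕ) : ℝ)))

/-- The Newton polygon `𝒩(f,h) = σ(𝒩(P_{f,h}))` of `h` relative to `f`, where `σ` swaps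
the two coordinates; here given in terms of coefficient data of the characteristic
polynomial. -/
def relNewtonPolygon (m : ℕ) (a : Fin m → (E → ℂ)) : Set (ℝ × ℝ) :=
  (fun p : ℝ × ℝ => (p.2, p.1)) '' newtonPolygon m a

/-- The germ of the `i`-th coordinate function, as an analytic germ. -/
def coordGerm {n : ℕ} (i : Fin n) : analyticGermsAt (Fin n → ℂ) :=
  ⟨(↑(fun w : Fin n → ℂ => w i) : Filter.Germ (𝓝 (0 : Fin n → ℂ)) ℂ),
    (⟨fun w : Fin n → ℂ => w i,
    (ContinuousLinearMap.proj (R := ℂ) (φ := fun _ : Fin n => ℂ) i).analyticAt 0, rfl⟩ :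
      ∃ u : (Fin n → ℂ) → ℂ, AnalyticAt ℂ u 0 ∧
        (↑(fun w : Fin n → ℂ => w i) : Filter.Germ (𝓝 (0 : Fin n → ℂ)) ℂ) = ↑u)⟩

end LojPaper

namespace LojPaper

/-!
Raising `c‖z‖^θ ≤ ‖f z‖` to the power `θ⁻¹` shows that the exponents admissible for `l₀(f)`
are exactly the inverses of those admissible in `‖z‖ ≤ c‖f z‖^θ`, and for the sup norm the
latter holds iff `‖zᵢ‖ ≤ c‖f z‖^θ` for every `i`. Since `f → 0` and `f = O(z)`, the exponents
admissible for `o_f(zᵢ)` form an interval `(0, rᵢ)` or `(0, rᵢ]` with `rᵢ ≤ 1`. Their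
intersection is then an interval with right end `m = min rᵢ`, and the infimum of its inverses
is `m⁻¹`; when `m = 0` the intersection is empty and both sides are `0` by the conventions
`sInf ∅ = 0` and `0⁻¹ = 0`.
-/

theorem mul_rpow_le_iff_le_mul_rpow_inv {a b c θ : ℝ} (ha : 0 ≤ a) (hb : 0 ≤ b) (hc : 0 < c)
    (hθ : 0 < θ) : c * a ^ θ ≤ b ↔ a ≤ c⁻¹ ^ θ⁻¹ * b ^ θ⁻¹ := by
  rw [← Real.mul_rpow (inv_nonneg.2 hc.le) hb, Real.le_rpow_inv_iff_of_pos ha (by positivity) hθ,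
    le_inv_mul_iff₀ hc]

theorem exists_mul_rpow_le_iff_exists_le_mul_rpow_inv {α : Type*} {l : Filter α} {a b : α → ℝ}
    (ha : ∀ x, 0 ≤ a x) (hb : ∀ x, 0 ≤ b x) {θ : ℝ} (hθ : 0 < θ) :
    (∃ c : ℝ, 0 < c ∧ ∀ᶠ x in l, c * a x ^ θ ≤ b x) ↔
      ∃ c : ℝ, 0 < c ∧ ∀ᶠ x in l, a x ≤ c * b x ^ θ⁻¹ := by
  constructor
  · rintro ⟨c, hc, h⟩
    exact ⟨c⁻¹ ^ θ⁻¹, by positivity, h.mono fun x hx =>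
      (mul_rpow_le_iff_le_mul_rpow_inv (ha x) (hb x) hc hθ).1 hx⟩
  · rintro ⟨d, hd, h⟩
    refine ⟨(d ^ θ)⁻¹, by positivity, h.mono fun x hx => ?_⟩
    rwa [mul_rpow_le_iff_le_mul_rpow_inv (ha x) (hb x) (by positivity) hθ, inv_inv,
      Real.rpow_rpow_inv hd.le hθ.ne']

theorem le_one_of_eventually_le_mul_rpow {K θ : ℝ} (h : ∀ᶠ t in 𝓝[>] (0 : ℝ), t ≤ K * t ^ θ) :
    θ ≤ 1 := by
  by_contra! hθ
  have hlim : Tendsto (fun t : ℝ => K * t ^ (θ - 1)) (𝓝[>] 0) (𝓝 0) := by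
    have := tendsto_nhdsWithin_of_tendsto_nhds (s := Set.Ioi 0)
      ((Real.continuousAt_rpow_const 0 (θ - 1) (Or.inr (by linarith))).tendsto.const_mul K)
    simpa [Real.zero_rpow (by linarith : θ - 1 ≠ 0)] using this
  obtain ⟨t, ht, hsmall, htpos⟩ :=
    (h.and ((hlim.eventually (gt_mem_nhds one_pos)).and self_mem_nhdsWithin)).exists
  have hsplit : K * t ^ θ = K * t ^ (θ - 1) * t := by
    rw [mul_assoc, ← Real.rpow_add_one (ne_of_gt htpos), sub_add_cancel]
  have := mul_lt_mul_of_pos_right hsmall (show 0 < t from htpos)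
  linarith

theorem Ioo_sSup_subset {S : Set ℝ} (hS : ∀ t ∈ S, Set.Ioc 0 t ⊆ S) :
    Set.Ioo 0 (sSup S) ⊆ S := by
  rintro s ⟨hs, hsS⟩
  have hne : S.Nonempty := Set.nonempty_iff_ne_empty.2 fun h => by
    simp only [h, Real.sSup_empty] at hsS
    linarith
  obtain ⟨t, ht, hst⟩ := exists_lt_of_lt_csSup hne hsS
  exact hS t ht ⟨hs, hst.le⟩

theorem Ioo_iInf_subset_iInter_subset_Ioc {ι : Type*} [Finite ι] [Nonempty ι] {T : ι → Set ℝ}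
    (hT : ∀ i, ∀ t ∈ T i, Set.Ioc 0 t ⊆ T i) (hpos : ∀ i, T i ⊆ Set.Ioi 0)
    (hbdd : ∀ i, BddAbove (T i)) :
    Set.Ioo 0 (⨅ i, sSup (T i)) ⊆ ⋂ i, T i ∧ ⋂ i, T i ⊆ Set.Ioc 0 (⨅ i, sSup (T i)) := by
  constructor
  · rintro s ⟨hs, hsm⟩
    refine Set.mem_iInter.2 fun i => Ioo_sSup_subset (hT i) ⟨hs, hsm.trans_le ?_⟩
    exact ciInf_le (Set.finite_range _).bddBelow i
  · intro s hs
    rw [Set.mem_iInter] at hs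
    exact ⟨hpos (Classical.arbitrary ι) (hs _), le_ciInf fun i => le_csSup (hbdd i) (hs i)⟩

theorem sInf_inv_eq_of_Ioo_subset_of_subset_Ioc {T : Set ℝ} {m : ℝ} (hm : 0 ≤ m)
    (h₁ : Set.Ioo 0 m ⊆ T) (h₂ : T ⊆ Set.Ioc 0 m) : sInf T⁻¹ = m⁻¹ := by
  rcases hm.eq_or_lt with rfl | hm
  · have : T = ∅ := Set.subset_empty_iff.1 (by simpa using h₂)
    simp [this]
  have hlow : Set.Ioi m⁻¹ ⊆ T⁻¹ := fun x hx =>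
    h₁ ⟨inv_pos.2 ((inv_pos.2 hm).trans hx), inv_lt_of_inv_lt₀ hm hx⟩
  have hup : T⁻¹ ⊆ Set.Ici m⁻¹ := fun x hx => by
    obtain ⟨hpos, hle⟩ := h₂ (Set.mem_inv.1 hx)
    simpa using inv_anti₀ hpos hle
  exact (isGLB_Ioi.of_subset_of_superset isGLB_Ici hlow hup).csInf_eq (Set.nonempty_Ioi.mono hlow)

section Exponents

variable {E E' F : Type*} [NormedAddCommGroup E] [NormedAddCommGroup E'] [NormedAddCommGroup F]

def lojExponents (f : E → E') : Set ℝ :=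
  {θ : ℝ | 0 < θ ∧ ∃ c : ℝ, 0 < c ∧ ∀ᶠ z in 𝓝 (0 : E), c * ‖z‖ ^ θ ≤ ‖f z‖}

def relLojExponents (f : E → E') (h : E → F) : Set ℝ :=
  {θ : ℝ | 0 < θ ∧ ∃ c : ℝ, 0 < c ∧ ∀ᶠ z in 𝓝 (0 : E), ‖h z‖ ≤ c * ‖f z‖ ^ θ}

theorem lojExp_eq_sInf_lojExponents [NormedSpace ℂ E] [NormedSpace ℂ E'] (f : E → E') :
    lojExp f = sInf (lojExponents f) :=
  rfl

theorem relLojExp_eq_sSup_relLojExponents [NormedSpace ℂ E] [NormedSpace ℂ E'] (f : E → E')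
    (h : E → ℂ) : relLojExp f h = sSup (relLojExponents f h) :=
  rfl

theorem lojExponents_eq_inv_relLojExponents_id (f : E → E') :
    lojExponents f = (relLojExponents f id)⁻¹ := by
  ext θ
  rw [Set.mem_inv]
  by_cases hθ : 0 < θ
  · simp only [lojExponents, relLojExponents, Set.mem_ofPred_eq, inv_pos, hθ, true_and, id]
    exact exists_mul_rpow_le_iff_exists_le_mul_rpow_inv (fun _ => norm_nonneg _)
      (fun _ => norm_nonneg _) hθ
  · simp [lojExponents, relLojExponents, hθ]

theorem relLojExponents_id_eq_iInter {ι : Type*} [Fintype ι] [Nonempty ι] {G : ι → Type*}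
    [∀ i, NormedAddCommGroup (G i)] (f : (∀ i, G i) → E') :
    relLojExponents f id = ⋂ i, relLojExponents f fun z => z i := by
  ext θ
  simp only [Set.mem_iInter]
  constructor
  · rintro ⟨hθ, c, hc, hz⟩ i
    exact ⟨hθ, c, hc, hz.mono fun z hz => (norm_le_pi_norm z i).trans hz⟩
  · intro h
    choose hθ c hc hz using h
    have hsum : 0 < ∑ i, c i := Finset.sum_pos (fun i _ => hc i) Finset.univ_nonempty
    refine ⟨hθ (Classical.arbitrary ι), ∑ i, c i, hsum, ?_⟩
    filter_upwards [eventually_all.2 hz] with z hz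
    refine (pi_norm_le_iff_of_nonneg (by positivity)).2 fun i => (hz i).trans ?_
    gcongr
    exact Finset.single_le_sum (fun j _ => (hc j).le) (Finset.mem_univ i)

theorem Ioc_subset_relLojExponents {f : E → E'} (hf : Tendsto f (𝓝 0) (𝓝 0)) {h : E → F} {t : ℝ}
    (ht : t ∈ relLojExponents f h) : Set.Ioc 0 t ⊆ relLojExponents f h := by
  rintro s ⟨hs, hst⟩
  obtain ⟨-, c, hc, hz⟩ := ht
  refine ⟨hs, c, hc, ?_⟩
  filter_upwards [hz, (tendsto_zero_iff_norm_tendsto_zero.1 hf).eventually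
    (eventually_le_nhds one_pos)] with z hz hfz
  exact hz.trans (mul_le_mul_of_nonneg_left
    (Real.rpow_le_rpow_of_exponent_ge' (norm_nonneg _) hfz hs.le hst) hc.le)

/-- Along the `i`-th coordinate axis `‖zᵢ‖ = ‖z‖`, so `‖z‖ ≤ c‖f z‖^θ ≤ c C^θ ‖z‖^θ`. -/
theorem le_one_of_mem_relLojExponents_apply {ι : Type*} [Fintype ι] [DecidableEq ι]
    {f : (ι → ℂ) → E'} (hf : f =O[𝓝 0] fun z => z) (i : ι) {θ : ℝ}
    (hθ : θ ∈ relLojExponents f fun z => z i) : θ ≤ 1 := by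
  obtain ⟨hθ, c, hc, hz⟩ := hθ
  obtain ⟨C, hC, hfC⟩ := hf.exists_pos
  set γ : ℝ → ι → ℂ := fun t => Pi.single i (t : ℂ)
  have hγ : Tendsto γ (𝓝[>] 0) (𝓝 0) := by
    have : Continuous γ := (continuous_single i).comp Complex.continuous_ofReal
    exact (this.tendsto' 0 0 (by simp [γ])).mono_left nhdsWithin_le_nhds
  refine le_one_of_eventually_le_mul_rpow (K := c * C ^ θ) ?_
  filter_upwards [hγ.eventually (hz.and hfC.bound), self_mem_nhdsWithin] with t ⟨h₁, h₂⟩ htpos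
  have ht : 0 ≤ t := le_of_lt htpos
  have hγi : ‖γ t i‖ = t := by simp [γ, ht]
  have hγt : ‖γ t‖ = t := by simp [γ, Pi.norm_single, ht]
  calc t = ‖γ t i‖ := hγi.symm
    _ ≤ c * ‖f (γ t)‖ ^ θ := h₁
    _ ≤ c * (C * t) ^ θ := by
      gcongr
      exact h₂.trans_eq (by rw [hγt])
    _ = c * C ^ θ * t ^ θ := by rw [Real.mul_rpow hC.le ht, mul_assoc]

end Exponents

theorem IsFiniteGerm.isBigO_id {E : Type*} [NormedAddCommGroup E] [NormedSpace ℂ E] {n : ℕ}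
    {f : E → Fin n → ℂ} (hf : IsFiniteGerm f) : f =O[𝓝 0] fun z => z := by
  have hd : DifferentiableAt ℂ f 0 :=
    differentiableAt_pi.2 fun i => (hf.analyticAt i).differentiableAt
  simpa [hf.map_zero] using hd.hasFDerivAt.isBigO_sub

/-- **Lemma 3.4.** For a finite holomorphic germ `f : (ℂⁿ,0) → (ℂⁿ,0)`,
`l₀(f) = (min_{i=1,…,n} o_f(zᵢ))⁻¹`, where `zᵢ` is the `i`-th coordinate function. -/
theorem lojExp_eq_inv_min_relLojExp_coords {n : ℕ} (hn : 0 < n)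
    (f : (Fin n → ℂ) → (Fin n → ℂ)) (hf : IsFiniteGerm f) :
    lojExp f = (sInf {x : ℝ | ∃ i : Fin n, x = relLojExp f fun z => z i})⁻¹ := by
  have : Nonempty (Fin n) := ⟨⟨0, hn⟩⟩
  have hO := hf.isBigO_id
  set T : Fin n → Set ℝ := fun i => relLojExponents f fun z => z i
  obtain ⟨hlow, hup⟩ := Ioo_iInf_subset_iInter_subset_Ioc (T := T)
    (fun _ _ => Ioc_subset_relLojExponents (hO.trans_tendsto tendsto_id))
    (fun _ _ ht => ht.1) (fun i => ⟨1, fun _ => le_one_of_mem_relLojExponents_apply hO i⟩)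
  have hm : 0 ≤ ⨅ i, sSup (T i) := le_ciInf fun i => Real.sSup_nonneg fun _ ht => ht.1.le
  have hrange : {x : ℝ | ∃ i : Fin n, x = relLojExp f fun z => z i} =
      Set.range fun i => sSup (T i) := by
    ext x
    simp only [Set.mem_ofPred_eq, Set.mem_range, eq_comm, relLojExp_eq_sSup_relLojExponents, T]
  rw [lojExp_eq_sInf_lojExponents, lojExponents_eq_inv_relLojExponents_id,
    relLojExponents_id_eq_iInter, hrange]
  exact sInf_inv_eq_of_Ioo_subset_of_subset_Ioc hm hlow hup

end LojPaper
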